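/- Let P be prime and let F_P denote the P×P unitary DFT matrix with entries (F_P)_{v,b} = P^{-1/2}·exp(−2πi v b / P). Let R := P^{-D/2} ∑_{x,a,b} r((a·x − b)) |a,b⟩⟨x| be the discrete ridgelet transform matrix with r : ZMod P → ℂ, ∑_b r(b) = 0, ∑_b |r(b)|² = 1. Then R = (I ⊗ F_P^†) · Π · (F_P^{⊗D} ⊗ F_P^†) · (I ⊗ |r⟩-preparation), where Π is the permutation-like isometry mapping |a'⟩⊗|v⟩ ↦ |v^{-1}a' mod P⟩⊗|v⟩ for v ≠ 0; equivalently, for every f : (ZMod P)^D → ℂ with ∑_x f(x) = 0, applying this composition to ∑_x f(x)|x⟩ ⊗ ∑_b r(b)|b⟩ yields ∑_{a,b} R[f](a,b) |a,b⟩. -/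

import Mathlib

open Complex Finset

noncomputable section

/-- The character `exp(-2πi c / P)` via the canonical representative. -/
def ch {P : ℕ} (c : ZMod P) : ℂ :=
  Complex.exp (-2 * Real.pi * Complex.I * (c.val : ℂ) / (P : ℂ))

/-- The character `exp(2πi c / P)`. -/
def chI {P : ℕ} (c : ZMod P) : ℂ :=
  Complex.exp (2 * Real.pi * Complex.I * (c.val : ℂ) / (P : ℂ))

/-- Dot product in `ZMod P`. -/
def dotp {P D : ℕ} (a x : Fin D → ZMod P) : ZMod P := ∑ j, a j * x j

/-- `D`-dimensional discrete Fourier transform on `(ZMod P)^D`. -/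
def Fd {P D : ℕ} [NeZero P] (f : (Fin D → ZMod P) → ℂ) (u : Fin D → ZMod P) : ℂ :=
  (((P : ℝ) ^ (-(D : ℝ) / 2) : ℝ) : ℂ) * ∑ x : Fin D → ZMod P, f x * ch (dotp u x)

/-- 1-dimensional discrete Fourier transform on `ZMod P`. -/
def Fo {P : ℕ} [NeZero P] (h : ZMod P → ℂ) (v : ZMod P) : ℂ :=
  (((P : ℝ) ^ (-(1 : ℝ) / 2) : ℝ) : ℂ) * ∑ b : ZMod P, h b * ch (v * b)

/-- Inverse 1-dimensional discrete Fourier transform on `ZMod P`. -/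
def FoInv {P : ℕ} [NeZero P] (H : ZMod P → ℂ) (b : ZMod P) : ℂ :=
  (((P : ℝ) ^ (-(1 : ℝ) / 2) : ℝ) : ℂ) * ∑ v : ZMod P, H v * chI (v * b)

/-- Discrete ridgelet transform `R[f](a,b) = P^(-D/2) * ∑ f(x) r(a·x - b)`. -/
def Rt {P D : ℕ} [NeZero P] (f : (Fin D → ZMod P) → ℂ) (r : ZMod P → ℂ)
    (a : Fin D → ZMod P) (b : ZMod P) : ℂ :=
  (((P : ℝ) ^ (-(D : ℝ) / 2) : ℝ) : ℂ) * ∑ x : Fin D → ZMod P, f x * r (dotp a x - b)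

/-- Discretized shallow neural network `S[w](x)`. -/
def Snn {P D : ℕ} [NeZero P] (g : ZMod P → ℂ) (w : (Fin D → ZMod P) → ZMod P → ℂ)
    (x : Fin D → ZMod P) : ℂ :=
  (((P : ℝ) ^ (-(D : ℝ) / 2) : ℝ) : ℂ) *
    ∑ a : Fin D → ZMod P, ∑ b : ZMod P, w a b * g (dotp a x - b)

/-- Step 2 of the QRT circuit: forward QFT on the first register and inverse QFT
on the second register. -/
def step2 {P D : ℕ} [NeZero P] (ψ : (Fin D → ZMod P) × ZMod P → ℂ) :
    (Fin D → ZMod P) × ZMod P → ℂ :=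
  fun p => (((P : ℝ) ^ (-(D : ℝ) / 2) : ℝ) : ℂ) * (((P : ℝ) ^ (-(1 : ℝ) / 2) : ℝ) : ℂ) *
    ∑ x : Fin D → ZMod P, ∑ b : ZMod P, ψ (x, b) * ch (dotp p.1 x) * chI (p.2 * b)

/-- Step 3 of the QRT circuit: the controlled modular-inverse relabeling
mapping basis state (a', v) to (v⁻¹ a', v) for v ≠ 0. -/
def permOp {P D : ℕ} (ψ : (Fin D → ZMod P) × ZMod P → ℂ) :
    (Fin D → ZMod P) × ZMod P → ℂ :=
  fun p => if p.2 = 0 then ψ p else ψ (fun j => p.2 * p.1 j, p.2)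

/-- Step 4 of the QRT circuit: inverse QFT on the second register. -/
def step4 {P D : ℕ} [NeZero P] (ψ : (Fin D → ZMod P) × ZMod P → ℂ) :
    (Fin D → ZMod P) × ZMod P → ℂ :=
  fun p => (((P : ℝ) ^ (-(1 : ℝ) / 2) : ℝ) : ℂ) * ∑ v : ZMod P, ψ (p.1, v) * chI (v * p.2)

/-! After the forward transforms, the product state `f ⊗ r` becomes `Fd f ⊗ FoInv r`, and its
`v = 0` slice vanishes because `r` has mean zero, so the relabeling `(a', v) ↦ (v a', v)` is
harmless there. On the other slices `Fd f (v a)` is, by the Fourier slice theorem, the transform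
at frequency `v` of the projection of `f` along `a · x`. The final inverse QFT in `v`, evaluated
at `c`, turns these phases into the forward transform of `FoInv r` at `a · x - c`, which is
`r (a · x - c)` by Fourier inversion on `ZMod P`. -/

section
variable {P D : ℕ}

lemma dotp_mul_left (v : ZMod P) (a x : Fin D → ZMod P) :
    dotp (fun j => v * a j) x = v * dotp a x := by
  simp only [dotp, mul_sum, mul_assoc]

lemma permOp_apply_of_forall_apply_zero {φ : (Fin D → ZMod P) × ZMod P → ℂ}
    (hφ : ∀ u, φ (u, 0) = 0) (a : Fin D → ZMod P) (v : ZMod P) :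
    permOp φ (a, v) = φ (fun j => v * a j, v) := by
  by_cases hv : v = 0
  · simp [permOp, hv, hφ]
  · simp [permOp, hv]

variable [NeZero P]

lemma chI_eq_stdAddChar (c : ZMod P) : chI c = ZMod.stdAddChar c := by
  rw [ZMod.stdAddChar_apply, ZMod.toCircle_apply, chI]

lemma ch_eq_chI_neg (s : ZMod P) : ch s = chI (-s) := by
  rw [chI_eq_stdAddChar, AddChar.map_neg_eq_inv, ← chI_eq_stdAddChar, ch, chI, ← exp_neg]
  congr 1
  ring

lemma ch_mul_chI (s t : ZMod P) : ch s * chI t = chI (t - s) := by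
  rw [ch_eq_chI_neg, chI_eq_stdAddChar, chI_eq_stdAddChar, chI_eq_stdAddChar,
    ← AddChar.map_add_eq_mul, neg_add_eq_sub]

lemma sum_chI_mul (t : ZMod P) : ∑ v : ZMod P, chI (v * t) = if t = 0 then (P : ℂ) else 0 := by
  classical
  simp only [chI_eq_stdAddChar, AddChar.sum_mulShift t (ZMod.isPrimitive_stdAddChar P), ZMod.card]
  split_ifs <;> simp

lemma ofReal_rpow_neg_half_mul_self_mul_cast :
    (((P : ℝ) ^ (-(1 : ℝ) / 2) : ℝ) : ℂ) * (((P : ℝ) ^ (-(1 : ℝ) / 2) : ℝ) : ℂ) * P = 1 := by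
  have hP : (0 : ℝ) < P := Nat.cast_pos.mpr (Nat.pos_of_ne_zero (NeZero.ne P))
  rw [← ofReal_mul, ← Real.rpow_add hP]
  norm_num [Real.rpow_neg_one, hP.ne']

lemma Fo_FoInv (h : ZMod P → ℂ) : Fo (FoInv h) = h := by
  funext t
  have hdelta : ∀ b, ∑ v : ZMod P, chI (b * v) * ch (t * v) = if b = t then (P : ℂ) else 0 := by
    intro b
    have hterm : ∀ v : ZMod P, chI (b * v) * ch (t * v) = chI (v * (b - t)) := fun v => by
      rw [mul_comm, ch_mul_chI, mul_sub, mul_comm t, mul_comm b]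
    simp only [hterm, sum_chI_mul, sub_eq_zero]
  calc Fo (FoInv h) t
      = (((P : ℝ) ^ (-(1 : ℝ) / 2) : ℝ) : ℂ) * (((P : ℝ) ^ (-(1 : ℝ) / 2) : ℝ) : ℂ) *
          ∑ b, h b * ∑ v : ZMod P, chI (b * v) * ch (t * v) := by
        simp only [Fo, FoInv, sum_mul, mul_sum]
        rw [sum_comm]
        refine sum_congr rfl fun b _ => sum_congr rfl fun v _ => ?_
        ring
    _ = h t := by
        simp only [hdelta, mul_ite, mul_zero, sum_ite_eq', mem_univ, if_true]
        linear_combination h t * ofReal_rpow_neg_half_mul_self_mul_cast (P := P)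

lemma FoInv_zero_of_sum_eq_zero {r : ZMod P → ℂ} (hr : ∑ b, r b = 0) : FoInv r 0 = 0 := by
  simp [FoInv, chI, hr]

lemma step2_mul_apply (f : (Fin D → ZMod P) → ℂ) (r : ZMod P → ℂ)
    (p : (Fin D → ZMod P) × ZMod P) :
    step2 (fun q => f q.1 * r q.2) p = Fd f p.1 * FoInv r p.2 := by
  simp only [step2, Fd, FoInv]
  rw [mul_mul_mul_comm, sum_mul_sum]
  congr 1
  refine sum_congr rfl fun x _ => sum_congr rfl fun b _ => ?_
  rw [mul_comm b]
  ring

end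

theorem qrt_circuit_correct_general (P D : ℕ) [Fact (Nat.Prime P)]
    (r : ZMod P → ℂ) (hr0 : ∑ b : ZMod P, r b = 0)
    (f : (Fin D → ZMod P) → ℂ) :
    step4 (permOp (step2 (fun p : (Fin D → ZMod P) × ZMod P => f p.1 * r p.2)))
      = fun p => Rt f r p.1 p.2 := by
  funext ⟨a, c⟩
  have hslice : ∀ v, permOp (step2 (fun p : (Fin D → ZMod P) × ZMod P => f p.1 * r p.2)) (a, v)
      = Fd f (fun j => v * a j) * FoInv r v := fun v => by
    rw [permOp_apply_of_forall_apply_zero (fun u => by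
      rw [step2_mul_apply, FoInv_zero_of_sum_eq_zero hr0, mul_zero]), step2_mul_apply]
  calc _
      = (((P : ℝ) ^ (-(D : ℝ) / 2) : ℝ) : ℂ) * ∑ x, f x * Fo (FoInv r) (dotp a x - c) := by
        simp only [step4, hslice, Fd, Fo, dotp_mul_left, mul_sum, sum_mul]
        rw [sum_comm]
        refine sum_congr rfl fun x _ => sum_congr rfl fun v _ => ?_
        rw [show ch ((dotp a x - c) * v) = ch (v * dotp a x) * chI (v * c) by
          rw [ch_mul_chI, ch_eq_chI_neg]; congr 1; ring]
        ring
    _ = Rt f r a c := by rw [Fo_FoInv, Rt]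

/-- Correctness of the quantum ridgelet transform circuit: the composition of QFTs
and the controlled modular-inverse arithmetic implements the ridgelet isometry on
mean-zero inputs. -/
theorem qrt_circuit_correct (P D : ℕ) [Fact (Nat.Prime P)]
    (r : ZMod P → ℂ) (hr0 : ∑ b : ZMod P, r b = 0)
    (hr1 : ∑ b : ZMod P, ‖r b‖ ^ 2 = 1)
    (f : (Fin D → ZMod P) → ℂ) (hf : ∑ x : Fin D → ZMod P, f x = 0) :
    step4 (permOp (step2 (fun p : (Fin D → ZMod P) × ZMod P => f p.1 * r p.2)))
      = fun p => Rt f r p.1 p.2 :=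
  qrt_circuit_correct_general P D r hr0 f
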